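/- Assume M is irreducible with unique invariant distribution π_M, and let ξ₁, …, ξ_k ∈ Δ(K) be affinely independent beliefs such that ξM ∈ conv{ξ₁, …, ξ_k} for every ξ ∈ Δ(K). Let γ₁, …, γ_k be the unique convex weights (γ_i ≥ 0, Σ_i γ_i = 1) with π_M = Σ_i γ_i ξ_i. Then the trajectory δ ↦ Σ_{i=1}^{k} γ_i · v_δ(ξ_i) is non-decreasing on [0,1). -/

import Mathlib

/-!
Fix a stationary strategy `(A, Z)` that is `(1 - δ₁) ε`-optimal for `v δ₁` at every belief, and
let `μ n` be the distribution of the belief at stage `n` when it is played from the split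
`∑ i, γ i • ξs i` of `πM`. Since `πM` is invariant, every `μ n` is again a split of `πM`, and for
`n ≥ 1` it lives on `conv (range ξs)`. Concavity of `v δ` and uniqueness of barycentric
coordinates with respect to the affinely independent `ξs` then give
`∑ i, γ i * v δ (ξs i) ≤ E_{μ n} (v δ)`, with equality at `n = 0`. With `c n` the expected stage
payoff, the Bellman equation yields `x n ≤ (1 - δ₁) (c n + ε) + δ₁ x (n + 1)` for
`x n = E_{μ n} (v δ₁)` and `(1 - δ₂) c n + δ₂ y (n + 1) ≤ y n` for `y n = E_{μ n} (v δ₂)`;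
as `x 0 ≤ x n` for all `n`, these force `x 0 ≤ y 0 + ε`.
-/

open scoped BigOperators

noncomputable section

/-- A row-stochastic matrix: nonnegative entries, rows summing to 1. -/
def IsStochastic {K : Type*} [Fintype K] (M : Matrix K K ℝ) : Prop :=
  (∀ i j, 0 ≤ M i j) ∧ ∀ i, ∑ j, M i j = 1

/-- A split of `ξ`: a countable family of weights `α` and beliefs `ξs` with
`α s ≥ 0`, `ξs s ∈ Δ(K)`, `∑ α = 1` and `∑ α_s ξ_s = ξ`. -/
def IsSplit {K : Type*} [Fintype K] (ξ : K → ℝ) (α : ℕ → ℝ) (ξs : ℕ → K → ℝ) : Prop :=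
  (∀ s, 0 ≤ α s) ∧ (∀ s, ξs s ∈ stdSimplex ℝ K) ∧ (∑' s, α s) = 1 ∧
    ∀ ℓ : K, (∑' s, α s * ξs s ℓ) = ξ ℓ

/-- The one-stage payoff of a split in the δ-discounted Bellman equation. -/
def splitPayoff {K : Type*} [Fintype K] (M : Matrix K K ℝ) (u : (K → ℝ) → ℝ) (δ : ℝ)
    (w : (K → ℝ) → ℝ) (α : ℕ → ℝ) (ξs : ℕ → K → ℝ) : ℝ :=
  ∑' s, α s * ((1 - δ) * u (ξs s) + δ * w (Matrix.vecMul (ξs s) M))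

/-- `v` is the family of δ-discounted values of the Markovian persuasion game:
for each `δ ∈ [0,1)`, `v δ` is bounded between `0` and `C = ‖u‖∞` on `Δ(K)` and
satisfies the Bellman equation there. -/
def IsValueFamily {K : Type*} [Fintype K] (M : Matrix K K ℝ) (u : (K → ℝ) → ℝ) (C : ℝ)
    (v : ℝ → (K → ℝ) → ℝ) : Prop :=
  ∀ δ ∈ Set.Ico (0 : ℝ) 1,
    (∀ ξ ∈ stdSimplex ℝ K, 0 ≤ v δ ξ ∧ v δ ξ ≤ C) ∧
    ∀ ξ ∈ stdSimplex ℝ K,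
      v δ ξ = sSup { r : ℝ | ∃ α ξs, IsSplit ξ α ξs ∧ r = splitPayoff M u δ (v δ) α ξs }

open Set Function Filter Topology Matrix

section

variable {K : Type*} [Fintype K]

theorem abs_apply_le_one_of_mem_stdSimplex {ι : Type*} [Fintype ι] {w : ι → ℝ}
    (hw : w ∈ stdSimplex ℝ ι) (i : ι) : |w i| ≤ 1 := by
  obtain ⟨h0, h1⟩ := mem_Icc_of_mem_stdSimplex hw i
  exact abs_le.mpr ⟨by linarith, h1⟩

theorem exists_mem_stdSimplex_sum_smul_eq {ι E : Type*} [Fintype ι] [AddCommGroup E]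
    [Module ℝ E] {p : ι → E} {x : E} (hx : x ∈ convexHull ℝ (range p)) :
    ∃ w ∈ stdSimplex ℝ ι, ∑ i, w i • p i = x := by
  classical
  rw [convexHull_range_eq_exists_affineCombination] at hx
  obtain ⟨s, w, hw0, hw1, rfl⟩ := hx
  have hsum : ∑ i, (s : Set ι).indicator w i = 1 := by
    rw [Finset.sum_indicator_subset w s.subset_univ, hw1]
  refine ⟨(s : Set ι).indicator w, ⟨fun i => ?_, hsum⟩, ?_⟩
  · by_cases hi : i ∈ s <;> simp [hi, hw0]
  · rw [Finset.affineCombination_indicator_subset w p s.subset_univ,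
      Finset.affineCombination_eq_linear_combination _ _ _ hsum]

theorem vecMul_mem_stdSimplex {M : Matrix K K ℝ} (hM : IsStochastic M) {ξ : K → ℝ}
    (hξ : ξ ∈ stdSimplex ℝ K) : ξ ᵥ* M ∈ stdSimplex ℝ K := by
  classical
  have hM' : M ∈ rowStochastic ℝ K := mem_rowStochastic_iff_sum.mpr hM
  refine ⟨nonneg_vecMul_of_mem_rowStochastic hM' hξ.1, ?_⟩
  have h1 := vecMul_dotProduct_one_eq_one_rowStochastic hM' (x := ξ)
    (by rw [dotProduct_one]; exact hξ.2)
  rwa [dotProduct_one] at h1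

def expect (α : ℕ → ℝ) (ζ : ℕ → K → ℝ) (f : (K → ℝ) → ℝ) : ℝ :=
  ∑' s, α s * f (ζ s)

namespace IsSplit

variable {ξ : K → ℝ} {α : ℕ → ℝ} {ζ : ℕ → K → ℝ}

theorem summable (h : IsSplit ξ α ζ) : Summable α := by
  by_contra hs
  have h1 := h.2.2.1
  rw [tsum_eq_zero_of_not_summable hs] at h1
  exact zero_ne_one h1

theorem norm_mul_le_mul (h : IsSplit ξ α ζ) {g : ℕ → ℝ} {B : ℝ} (hg : ∀ s, |g s| ≤ B) (s : ℕ) :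
    ‖α s * g s‖ ≤ α s * B := by
  rw [Real.norm_eq_abs, abs_mul, abs_of_nonneg (h.1 s)]
  exact mul_le_mul_of_nonneg_left (hg s) (h.1 s)

theorem summable_mul (h : IsSplit ξ α ζ) {g : ℕ → ℝ} {B : ℝ} (hg : ∀ s, |g s| ≤ B) :
    Summable fun s => α s * g s :=
  (h.summable.mul_right B).of_norm_bounded (h.norm_mul_le_mul hg)

theorem summable_expect (h : IsSplit ξ α ζ) {f : (K → ℝ) → ℝ} {B : ℝ}
    (hf : ∀ η ∈ stdSimplex ℝ K, |f η| ≤ B) : Summable fun s => α s * f (ζ s) :=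
  h.summable_mul fun s => hf _ (h.2.1 s)

theorem abs_expect_le (h : IsSplit ξ α ζ) {f : (K → ℝ) → ℝ} {B : ℝ}
    (hf : ∀ η ∈ stdSimplex ℝ K, |f η| ≤ B) : |expect α ζ f| ≤ B := by
  have := (h.summable_expect hf).hasSum.norm_le_of_bounded (h.summable.hasSum.mul_right B)
    (h.norm_mul_le_mul fun s => hf _ (h.2.1 s))
  rwa [h.2.2.1, one_mul] at this

theorem expect_congr (h : IsSplit ξ α ζ) {f g : (K → ℝ) → ℝ}
    (hfg : ∀ η ∈ stdSimplex ℝ K, f η = g η) : expect α ζ f = expect α ζ g :=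
  tsum_congr fun s => by rw [hfg _ (h.2.1 s)]

theorem expect_apply (h : IsSplit ξ α ζ) (ℓ : K) : expect α ζ (fun η => η ℓ) = ξ ℓ :=
  h.2.2.2 ℓ

theorem expect_const (h : IsSplit ξ α ζ) (c : ℝ) : expect α ζ (fun _ => c) = c := by
  rw [expect, tsum_mul_right, h.2.2.1, one_mul]

theorem expect_add_const (h : IsSplit ξ α ζ) {f : (K → ℝ) → ℝ} {B : ℝ}
    (hf : ∀ η ∈ stdSimplex ℝ K, |f η| ≤ B) (c : ℝ) :
    expect α ζ (fun η => f η + c) = expect α ζ f + c := by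
  simp only [expect, mul_add]
  rw [(h.summable_expect hf).tsum_add (h.summable.mul_right c), tsum_mul_right, h.2.2.1, one_mul]

theorem expect_mono (h : IsSplit ξ α ζ) {f g : (K → ℝ) → ℝ} {B B' : ℝ}
    (hf : ∀ η ∈ stdSimplex ℝ K, |f η| ≤ B) (hg : ∀ η ∈ stdSimplex ℝ K, |g η| ≤ B')
    (hfg : ∀ η ∈ stdSimplex ℝ K, f η ≤ g η) : expect α ζ f ≤ expect α ζ g :=
  (h.summable_expect hf).tsum_le_tsum
    (fun s => mul_le_mul_of_nonneg_left (hfg _ (h.2.1 s)) (h.1 s)) (h.summable_expect hg)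

theorem sum_tsum_mul {ι : Type*} [Fintype ι] (h : IsSplit ξ α ζ) {w : ℕ → ι → ℝ}
    (hw : ∀ s, w s ∈ stdSimplex ℝ ι) (c : ι → ℝ) :
    ∑ i, (∑' s, α s * w s i) * c i = ∑' s, α s * ∑ i, w s i * c i := by
  have hsum : ∀ i, Summable fun s => α s * (w s i * c i) := fun i =>
    h.summable_mul (B := |c i|) fun s => by
      rw [abs_mul]
      exact mul_le_of_le_one_left (abs_nonneg _) (abs_apply_le_one_of_mem_stdSimplex (hw s) i)
  simp_rw [Finset.mul_sum]
  rw [Summable.tsum_finsetSum fun i _ => hsum i]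
  refine Finset.sum_congr rfl fun i _ => ?_
  rw [← tsum_mul_right]
  exact tsum_congr fun s => by ring

theorem vecMul {M : Matrix K K ℝ} (hM : IsStochastic M) (h : IsSplit ξ α ζ) :
    IsSplit (ξ ᵥ* M) α (fun s => ζ s ᵥ* M) := by
  refine ⟨h.1, fun s => vecMul_mem_stdSimplex hM (h.2.1 s), h.2.2.1, fun ℓ => ?_⟩
  have hsum : ∀ ℓ', Summable fun s => α s * ζ s ℓ' * M ℓ' ℓ := fun ℓ' =>
    (h.summable_mul fun s => abs_apply_le_one_of_mem_stdSimplex (h.2.1 s) ℓ').mul_right _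
  simp only [Matrix.vecMul, dotProduct, Finset.mul_sum, ← mul_assoc]
  rw [Summable.tsum_finsetSum fun ℓ' _ => hsum ℓ']
  exact Finset.sum_congr rfl fun ℓ' _ => by rw [tsum_mul_right, h.2.2.2 ℓ']

end IsSplit

theorem exists_isSplit_sum {ι : Type*} [Fintype ι] {w : ι → ℝ} {q : ι → K → ℝ}
    (hw0 : ∀ i, 0 ≤ w i) (hw1 : ∑ i, w i = 1) (hq : ∀ i, q i ∈ stdSimplex ℝ K) :
    ∃ α ζ, IsSplit (∑ i, w i • q i) α ζ ∧ ∀ f, expect α ζ f = ∑ i, w i * f (q i) := by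
  obtain ⟨e, he⟩ := Countable.exists_injective_nat ι
  set ξ := ∑ i, w i • q i
  have hξ : ξ ∈ stdSimplex ℝ K := (convex_stdSimplex ℝ K).sum_mem (fun i _ => hw0 i) hw1
    fun i _ => hq i
  have hexpect : ∀ f, expect (extend e w 0) (extend e q fun _ => ξ) f = ∑ i, w i * f (q i) := by
    intro f
    rw [← tsum_fintype (L := SummationFilter.unconditional ι), ← tsum_extend_zero he]
    refine tsum_congr fun n => ?_
    by_cases hn : ∃ i, e i = n
    · obtain ⟨i, rfl⟩ := hn
      simp only [he.extend_apply]
    · simp only [extend_apply' _ _ _ hn, Pi.zero_apply, zero_mul]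
  refine ⟨_, _, ⟨fun n => ?_, fun n => ?_, ?_, fun ℓ => ?_⟩, hexpect⟩
  · by_cases hn : ∃ i, e i = n
    · obtain ⟨i, rfl⟩ := hn
      simpa only [he.extend_apply] using hw0 i
    · simp only [extend_apply' _ _ _ hn, Pi.zero_apply, le_refl]
  · by_cases hn : ∃ i, e i = n
    · obtain ⟨i, rfl⟩ := hn
      simpa only [he.extend_apply] using hq i
    · simpa only [extend_apply' _ _ _ hn] using hξ
  · simpa [expect, hw1] using hexpect fun _ => 1
  · simpa [expect, ξ, Finset.sum_apply] using hexpect fun η => η ℓ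

def bindWeights (α : ℕ → ℝ) (ζ : ℕ → K → ℝ) (A : (K → ℝ) → ℕ → ℝ) (n : ℕ) : ℝ :=
  α n.unpair.1 * A (ζ n.unpair.1) n.unpair.2

def bindPoints (ζ : ℕ → K → ℝ) (Z : (K → ℝ) → ℕ → K → ℝ) (n : ℕ) : K → ℝ :=
  Z (ζ n.unpair.1) n.unpair.2

namespace IsSplit

variable {ξ : K → ℝ} {α : ℕ → ℝ} {ζ : ℕ → K → ℝ}
  {A : (K → ℝ) → ℕ → ℝ} {Z : (K → ℝ) → ℕ → K → ℝ}

theorem expect_bind (h : IsSplit ξ α ζ) (hS : ∀ η ∈ stdSimplex ℝ K, IsSplit η (A η) (Z η))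
    {f : (K → ℝ) → ℝ} {B : ℝ} (hf : ∀ η ∈ stdSimplex ℝ K, |f η| ≤ B) :
    expect (bindWeights α ζ A) (bindPoints ζ Z) f =
      expect α ζ fun η => expect (A η) (Z η) f := by
  have hS' : ∀ s, IsSplit (ζ s) (A (ζ s)) (Z (ζ s)) := fun s => hS _ (h.2.1 s)
  have hB : 0 ≤ B := (abs_nonneg _).trans (hf _ (h.2.1 0))
  set g : ℕ × ℕ → ℝ := fun q => α q.1 * (A (ζ q.1) q.2 * f (Z (ζ q.1) q.2))
  set m : ℕ × ℕ → ℝ := fun q => α q.1 * (A (ζ q.1) q.2 * B)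
  have hm : Summable m := by
    refine (summable_prod_of_nonneg fun q => mul_nonneg (h.1 _)
      (mul_nonneg ((hS' _).1 _) hB)).mpr ⟨fun s => ?_, ?_⟩
    · exact ((hS' s).summable.mul_right B).mul_left (α s)
    · simp only [tsum_mul_left, tsum_mul_right, (hS' _).2.2.1, one_mul]
      exact h.summable.mul_right B
  have hg : Summable g := hm.of_norm_bounded fun q => by
    rw [Real.norm_eq_abs, abs_mul, abs_mul, abs_of_nonneg (h.1 _), abs_of_nonneg ((hS' _).1 _)]
    exact mul_le_mul_of_nonneg_left
      (mul_le_mul_of_nonneg_left (hf _ ((hS' _).2.1 _)) ((hS' _).1 _)) (h.1 _)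
  calc expect (bindWeights α ζ A) (bindPoints ζ Z) f = ∑' n, g (Nat.pairEquiv.symm n) :=
        tsum_congr fun n => by simp [g, bindWeights, bindPoints, mul_assoc]
    _ = ∑' s, ∑' t, g (s, t) := by
        rw [Nat.pairEquiv.symm.tsum_eq g,
          hg.tsum_prod' fun s => ((hS' s).summable_expect hf).mul_left (α s)]
    _ = expect α ζ fun η => expect (A η) (Z η) f := by simp only [g, expect, tsum_mul_left]

theorem bind (h : IsSplit ξ α ζ) (hS : ∀ η ∈ stdSimplex ℝ K, IsSplit η (A η) (Z η)) :
    IsSplit ξ (bindWeights α ζ A) (bindPoints ζ Z) := by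
  have hS' : ∀ s, IsSplit (ζ s) (A (ζ s)) (Z (ζ s)) := fun s => hS _ (h.2.1 s)
  refine ⟨fun n => mul_nonneg (h.1 _) ((hS' _).1 _), fun n => (hS' _).2.1 _, ?_, fun ℓ => ?_⟩
  · have h1 := h.expect_bind hS (f := fun _ => 1) (B := 1) (by simp)
    rw [h.expect_congr fun η hη => (hS η hη).expect_const 1, h.expect_const] at h1
    simpa [expect] using h1
  · have h1 := h.expect_bind hS (f := fun η => η ℓ) (B := 1)
      fun η hη => abs_apply_le_one_of_mem_stdSimplex hη ℓ
    rw [h.expect_congr fun η hη => (hS η hη).expect_apply ℓ, h.expect_apply] at h1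
    exact h1

end IsSplit

theorem ConcaveOn.sum_mul_le_expect {ι : Type*} [Fintype ι] {f : (K → ℝ) → ℝ} {B : ℝ}
    (hf : ConcaveOn ℝ (stdSimplex ℝ K) f) (hfB : ∀ η ∈ stdSimplex ℝ K, |f η| ≤ B)
    {ξs : ι → K → ℝ} (hξs : ∀ i, ξs i ∈ stdSimplex ℝ K) (haff : AffineIndependent ℝ ξs)
    {γ : ι → ℝ} (hγ1 : ∑ i, γ i = 1) {α : ℕ → ℝ} {ζ : ℕ → K → ℝ}
    (h : IsSplit (∑ i, γ i • ξs i) α ζ) (hζ : ∀ s, ζ s ∈ convexHull ℝ (range ξs)) :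
    ∑ i, γ i * f (ξs i) ≤ expect α ζ f := by
  choose w hw hwζ using fun s => exists_mem_stdSimplex_sum_smul_eq (hζ s)
  have hswap := h.sum_tsum_mul hw
  have hd1 : ∑ i, ∑' s, α s * w s i = 1 := by
    simpa [(hw _).2, h.2.2.1] using hswap 1
  have hdγ : (fun i => ∑' s, α s * w s i) = γ := by
    refine (affineIndependent_iff_eq_of_fintype_affineCombination_eq ℝ ξs).mp haff _ _ hd1 hγ1 ?_
    rw [Finset.affineCombination_eq_linear_combination _ _ _ hd1,
      Finset.affineCombination_eq_linear_combination _ _ _ hγ1]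
    funext ℓ
    rw [← h.expect_apply ℓ]
    simp only [Finset.sum_apply, Pi.smul_apply, smul_eq_mul]
    rw [hswap]
    exact tsum_congr fun s => by simp [← hwζ s, Finset.sum_apply]
  have hjensen : ∀ s, ∑ i, w s i * f (ξs i) ≤ f (ζ s) := fun s => by
    simpa [hwζ s] using hf.le_map_sum (t := Finset.univ) (fun i _ => (hw s).1 i) (hw s).2
      fun i _ => hξs i
  have hbound : ∀ s, |∑ i, w s i * f (ξs i)| ≤ B := fun s =>
    calc |∑ i, w s i * f (ξs i)| ≤ ∑ i, w s i * B :=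
          (Finset.abs_sum_le_sum_abs _ _).trans <| Finset.sum_le_sum fun i _ => by
            rw [abs_mul, abs_of_nonneg ((hw s).1 i)]
            exact mul_le_mul_of_nonneg_left (hfB _ (hξs i)) ((hw s).1 i)
      _ = B := by rw [← Finset.sum_mul, (hw s).2, one_mul]
  rw [← hdγ, hswap]
  exact (h.summable_mul hbound).tsum_le_tsum
    (fun s => mul_le_mul_of_nonneg_left (hjensen s) (h.1 s)) (h.summable_expect hfB)

namespace IsValueFamily

variable {M : Matrix K K ℝ} {u : (K → ℝ) → ℝ} {C : ℝ} {v : ℝ → (K → ℝ) → ℝ} {δ : ℝ}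
  {ξ : K → ℝ} {α : ℕ → ℝ} {ζ : ℕ → K → ℝ}

theorem abs_apply_le (hv : IsValueFamily M u C v) (hδ : δ ∈ Ico 0 1) {η : K → ℝ}
    (hη : η ∈ stdSimplex ℝ K) : |v δ η| ≤ C := by
  obtain ⟨h0, h1⟩ := (hv δ hδ).1 η hη
  exact abs_le.mpr ⟨by linarith, h1⟩

theorem abs_stagePayoff_le (hM : IsStochastic M) (hu0 : ∀ ξ ∈ stdSimplex ℝ K, 0 ≤ u ξ)
    (hC : IsLUB (u '' stdSimplex ℝ K) C) (hv : IsValueFamily M u C v) (hδ : δ ∈ Ico 0 1)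
    {η : K → ℝ} (hη : η ∈ stdSimplex ℝ K) : |(1 - δ) * u η + δ * v δ (η ᵥ* M)| ≤ C := by
  obtain ⟨hv0, hvC⟩ := (hv δ hδ).1 _ (vecMul_mem_stdSimplex hM hη)
  have hu := hu0 η hη
  have huC : u η ≤ C := hC.1 ⟨η, hη, rfl⟩
  obtain ⟨hδ0, hδ1⟩ := hδ
  exact abs_le.mpr ⟨by nlinarith, by nlinarith⟩

theorem splitPayoff_eq (hM : IsStochastic M) (hu0 : ∀ ξ ∈ stdSimplex ℝ K, 0 ≤ u ξ)
    (hC : IsLUB (u '' stdSimplex ℝ K) C) (hv : IsValueFamily M u C v) (hδ : δ ∈ Ico 0 1)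
    (h : IsSplit ξ α ζ) :
    splitPayoff M u δ (v δ) α ζ =
      (1 - δ) * expect α ζ u + δ * expect α (fun s => ζ s ᵥ* M) (v δ) := by
  have hu : Summable fun s => α s * u (ζ s) :=
    h.summable_expect (B := C) fun η hη => by
      rw [abs_of_nonneg (hu0 η hη)]; exact hC.1 ⟨η, hη, rfl⟩
  have hw : Summable fun s => α s * v δ (ζ s ᵥ* M) :=
    (h.vecMul hM).summable_expect fun η hη => hv.abs_apply_le hδ hη
  rw [expect, expect, ← tsum_mul_left, ← tsum_mul_left,
    ← (hu.mul_left _).tsum_add (hw.mul_left _)]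
  exact tsum_congr fun s => by ring

theorem splitPayoff_le (hM : IsStochastic M) (hu0 : ∀ ξ ∈ stdSimplex ℝ K, 0 ≤ u ξ)
    (hC : IsLUB (u '' stdSimplex ℝ K) C) (hv : IsValueFamily M u C v) (hδ : δ ∈ Ico 0 1)
    (hξ : ξ ∈ stdSimplex ℝ K) (h : IsSplit ξ α ζ) : splitPayoff M u δ (v δ) α ζ ≤ v δ ξ := by
  rw [(hv δ hδ).2 ξ hξ]
  refine le_csSup ⟨C, ?_⟩ ⟨α, ζ, h, rfl⟩
  rintro _ ⟨α', ζ', h', rfl⟩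
  exact (le_abs_self _).trans
    (h'.abs_expect_le fun η hη => hv.abs_stagePayoff_le hM hu0 hC hδ hη)

theorem exists_isSplit_le_splitPayoff_add (hv : IsValueFamily M u C v) (hδ : δ ∈ Ico 0 1)
    (hξ : ξ ∈ stdSimplex ℝ K) {ε : ℝ} (hε : 0 < ε) :
    ∃ α ζ, IsSplit ξ α ζ ∧ v δ ξ ≤ splitPayoff M u δ (v δ) α ζ + ε := by
  obtain ⟨α₀, ζ₀, h₀, -⟩ := exists_isSplit_sum (w := fun _ : Unit => 1) (q := fun _ => ξ)
    (fun _ => zero_le_one) (by simp) fun _ => hξ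
  rw [Finset.univ_unique, Finset.sum_singleton, one_smul] at h₀
  have hne : { r : ℝ | ∃ α ζ, IsSplit ξ α ζ ∧ r = splitPayoff M u δ (v δ) α ζ }.Nonempty :=
    ⟨_, α₀, ζ₀, h₀, rfl⟩
  obtain ⟨_, ⟨α, ζ, h, rfl⟩, hr⟩ :=
    exists_lt_of_lt_csSup hne (show v δ ξ - ε < _ by rw [← (hv δ hδ).2 ξ hξ]; linarith)
  exact ⟨α, ζ, h, by linarith⟩

variable {A : (K → ℝ) → ℕ → ℝ} {Z : (K → ℝ) → ℕ → K → ℝ}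

theorem splitPayoff_bind (hM : IsStochastic M) (hu0 : ∀ ξ ∈ stdSimplex ℝ K, 0 ≤ u ξ)
    (hC : IsLUB (u '' stdSimplex ℝ K) C) (hv : IsValueFamily M u C v) (hδ : δ ∈ Ico 0 1)
    (hS : ∀ η ∈ stdSimplex ℝ K, IsSplit η (A η) (Z η)) (h : IsSplit ξ α ζ) :
    splitPayoff M u δ (v δ) (bindWeights α ζ A) (bindPoints ζ Z) =
      expect α ζ fun η => splitPayoff M u δ (v δ) (A η) (Z η) :=
  h.expect_bind hS fun _ hη => hv.abs_stagePayoff_le hM hu0 hC hδ hη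

theorem splitPayoff_bind_le_expect (hM : IsStochastic M) (hu0 : ∀ ξ ∈ stdSimplex ℝ K, 0 ≤ u ξ)
    (hC : IsLUB (u '' stdSimplex ℝ K) C) (hv : IsValueFamily M u C v) (hδ : δ ∈ Ico 0 1)
    (hS : ∀ η ∈ stdSimplex ℝ K, IsSplit η (A η) (Z η)) (h : IsSplit ξ α ζ) :
    splitPayoff M u δ (v δ) (bindWeights α ζ A) (bindPoints ζ Z) ≤ expect α ζ (v δ) := by
  rw [hv.splitPayoff_bind hM hu0 hC hδ hS h]
  exact h.expect_mono (fun η hη => (hS η hη).abs_expect_le fun _ hη' =>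
      hv.abs_stagePayoff_le hM hu0 hC hδ hη') (fun η hη => hv.abs_apply_le hδ hη)
    fun η hη => hv.splitPayoff_le hM hu0 hC hδ hη (hS η hη)

theorem expect_le_splitPayoff_bind_add (hM : IsStochastic M)
    (hu0 : ∀ ξ ∈ stdSimplex ℝ K, 0 ≤ u ξ) (hC : IsLUB (u '' stdSimplex ℝ K) C)
    (hv : IsValueFamily M u C v) (hδ : δ ∈ Ico 0 1)
    (hS : ∀ η ∈ stdSimplex ℝ K, IsSplit η (A η) (Z η)) {ε : ℝ}
    (hopt : ∀ η ∈ stdSimplex ℝ K, v δ η ≤ splitPayoff M u δ (v δ) (A η) (Z η) + ε)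
    (h : IsSplit ξ α ζ) :
    expect α ζ (v δ) ≤ splitPayoff M u δ (v δ) (bindWeights α ζ A) (bindPoints ζ Z) + ε := by
  have hpay : ∀ η ∈ stdSimplex ℝ K, |splitPayoff M u δ (v δ) (A η) (Z η)| ≤ C :=
    fun η hη => (hS η hη).abs_expect_le fun _ hη' => hv.abs_stagePayoff_le hM hu0 hC hδ hη'
  rw [hv.splitPayoff_bind hM hu0 hC hδ hS h, ← h.expect_add_const hpay]
  refine h.expect_mono (fun η hη => hv.abs_apply_le hδ hη) (B' := C + |ε|) (fun η hη => ?_) hopt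
  exact (abs_add_le _ _).trans (by gcongr; exact hpay η hη)

theorem expect_le (hM : IsStochastic M) (hu0 : ∀ ξ ∈ stdSimplex ℝ K, 0 ≤ u ξ)
    (hC : IsLUB (u '' stdSimplex ℝ K) C) (hv : IsValueFamily M u C v) (hδ : δ ∈ Ico 0 1)
    (hξ : ξ ∈ stdSimplex ℝ K) (h : IsSplit ξ α ζ) : expect α ζ (v δ) ≤ v δ ξ := by
  refine le_of_forall_pos_le_add fun ε hε => ?_
  choose! A Z hS hopt using fun η (hη : η ∈ stdSimplex ℝ K) =>
    hv.exists_isSplit_le_splitPayoff_add hδ hη hε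
  exact (hv.expect_le_splitPayoff_bind_add hM hu0 hC hδ hS hopt h).trans
    (by gcongr; exact hv.splitPayoff_le hM hu0 hC hδ hξ (h.bind hS))

theorem concaveOn (hM : IsStochastic M) (hu0 : ∀ ξ ∈ stdSimplex ℝ K, 0 ≤ u ξ)
    (hC : IsLUB (u '' stdSimplex ℝ K) C) (hv : IsValueFamily M u C v) (hδ : δ ∈ Ico 0 1) :
    ConcaveOn ℝ (stdSimplex ℝ K) (v δ) := by
  refine ⟨convex_stdSimplex ℝ K, fun x hx y hy a b ha hb hab => ?_⟩
  obtain ⟨α, ζ, h, hexpect⟩ := exists_isSplit_sum (w := ![a, b]) (q := ![x, y])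
    (fun i => by fin_cases i <;> simp [ha, hb]) (by simpa using hab)
    fun i => by fin_cases i <;> simp [hx, hy]
  simp only [Fin.sum_univ_two, Matrix.cons_val_zero, Matrix.cons_val_one] at h hexpect
  simpa [hexpect, smul_eq_mul] using
    hv.expect_le hM hu0 hC hδ (convex_stdSimplex ℝ K hx hy ha hb hab) h

theorem stage_le_expect (hM : IsStochastic M) (hu0 : ∀ ξ ∈ stdSimplex ℝ K, 0 ≤ u ξ)
    (hC : IsLUB (u '' stdSimplex ℝ K) C) (hv : IsValueFamily M u C v) (hδ : δ ∈ Ico 0 1)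
    (hS : ∀ η ∈ stdSimplex ℝ K, IsSplit η (A η) (Z η)) (h : IsSplit ξ α ζ) :
    (1 - δ) * expect (bindWeights α ζ A) (bindPoints ζ Z) u +
      δ * expect (bindWeights α ζ A) (fun s => bindPoints ζ Z s ᵥ* M) (v δ) ≤
      expect α ζ (v δ) := by
  rw [← hv.splitPayoff_eq hM hu0 hC hδ (h.bind hS)]
  exact hv.splitPayoff_bind_le_expect hM hu0 hC hδ hS h

theorem expect_le_stage_add (hM : IsStochastic M) (hu0 : ∀ ξ ∈ stdSimplex ℝ K, 0 ≤ u ξ)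
    (hC : IsLUB (u '' stdSimplex ℝ K) C) (hv : IsValueFamily M u C v) (hδ : δ ∈ Ico 0 1)
    (hS : ∀ η ∈ stdSimplex ℝ K, IsSplit η (A η) (Z η)) {ε : ℝ}
    (hopt : ∀ η ∈ stdSimplex ℝ K, v δ η ≤ splitPayoff M u δ (v δ) (A η) (Z η) + (1 - δ) * ε)
    (h : IsSplit ξ α ζ) :
    expect α ζ (v δ) ≤ (1 - δ) * (expect (bindWeights α ζ A) (bindPoints ζ Z) u + ε) +
      δ * expect (bindWeights α ζ A) (fun s => bindPoints ζ Z s ᵥ* M) (v δ) := by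
  have := hv.expect_le_splitPayoff_bind_add hM hu0 hC hδ hS hopt h
  rw [hv.splitPayoff_eq hM hu0 hC hδ (h.bind hS)] at this
  linarith

end IsValueFamily

theorem nonneg_of_forall_mul_succ_le {q : ℝ} {Ψ : ℕ → ℝ} (hq0 : 0 ≤ q) (hq1 : q < 1)
    (hΨ : BddBelow (range Ψ)) (h : ∀ n, q * Ψ (n + 1) ≤ Ψ n) : 0 ≤ Ψ 0 := by
  obtain ⟨m, hm⟩ := hΨ
  have hpow : ∀ n, q ^ n * Ψ n ≤ Ψ 0 := by
    intro n
    induction n with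
    | zero => simp
    | succ n ih =>
      calc q ^ (n + 1) * Ψ (n + 1) = q ^ n * (q * Ψ (n + 1)) := by ring
        _ ≤ q ^ n * Ψ n := mul_le_mul_of_nonneg_left (h n) (pow_nonneg hq0 n)
        _ ≤ Ψ 0 := ih
  have hlim : Tendsto (fun n => q ^ n * m) atTop (𝓝 0) := by
    simpa using (tendsto_pow_atTop_nhds_zero_of_lt_one hq0 hq1).mul_const m
  exact le_of_tendsto' hlim fun n =>
    (mul_le_mul_of_nonneg_left (hm ⟨n, rfl⟩) (pow_nonneg hq0 n)).trans (hpow n)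

/-- `(1 - δ₁) y n - (1 - δ₂) x n` satisfies a `δ₂`-contraction inequality, so it cannot fall
below its fixed point `(δ₂ - δ₁) x 0 - (1 - δ₁) ε`. -/
theorem le_add_of_discounted_recursions {δ₁ δ₂ ε : ℝ} {x y c : ℕ → ℝ} (h12 : δ₁ ≤ δ₂)
    (hδ₂0 : 0 ≤ δ₂) (hδ₂1 : δ₂ < 1) (hx : BddAbove (range x)) (hy : BddBelow (range y))
    (hxc : ∀ n, x n ≤ (1 - δ₁) * (c n + ε) + δ₁ * x (n + 1))
    (hyc : ∀ n, (1 - δ₂) * c n + δ₂ * y (n + 1) ≤ y n) (hx0 : ∀ n, x 0 ≤ x n) :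
    x 0 ≤ y 0 + ε := by
  have h1 : 0 < 1 - δ₁ := by linarith
  have h2 : 0 < 1 - δ₂ := by linarith
  set b := (δ₂ - δ₁) * x 0 - (1 - δ₁) * ε
  have hΨ := nonneg_of_forall_mul_succ_le (Ψ := fun n => (1 - δ₁) * y n - (1 - δ₂) * x n - b)
    hδ₂0 hδ₂1 ?_ fun n => ?_
  · have : 0 ≤ (1 - δ₁) * (y 0 + ε - x 0) := by simp only [b] at hΨ; linarith
    linarith [(mul_nonneg_iff_of_pos_left h1).mp this]
  · obtain ⟨X, hX⟩ := hx
    obtain ⟨Y, hY⟩ := hy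
    refine ⟨(1 - δ₁) * Y - (1 - δ₂) * X - b, ?_⟩
    rintro _ ⟨n, rfl⟩
    have := mul_le_mul_of_nonneg_left (hY ⟨n, rfl⟩) h1.le
    have := mul_le_mul_of_nonneg_left (hX ⟨n, rfl⟩) h2.le
    dsimp only
    linarith
  · have := mul_le_mul_of_nonneg_left (hyc n) h1.le
    have := mul_le_mul_of_nonneg_left (hxc n) h2.le
    have := mul_le_mul_of_nonneg_left (hx0 (n + 1)) (mul_nonneg h2.le (sub_nonneg.2 h12))
    linarith

/-- The distribution of the belief at the start of each stage when the stationary strategy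
`(A, Z)` is played from the split `(α₀, ζ₀)`. -/
def beliefProcess (M : Matrix K K ℝ) (A : (K → ℝ) → ℕ → ℝ) (Z : (K → ℝ) → ℕ → K → ℝ)
    (α₀ : ℕ → ℝ) (ζ₀ : ℕ → K → ℝ) : ℕ → (ℕ → ℝ) × (ℕ → K → ℝ)
  | 0 => (α₀, ζ₀)
  | n + 1 =>
    ((bindWeights (beliefProcess M A Z α₀ ζ₀ n).1 (beliefProcess M A Z α₀ ζ₀ n).2 A),
      fun s => bindPoints (beliefProcess M A Z α₀ ζ₀ n).2 Z s ᵥ* M)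

theorem isSplit_beliefProcess {M : Matrix K K ℝ} (hM : IsStochastic M)
    {A : (K → ℝ) → ℕ → ℝ} {Z : (K → ℝ) → ℕ → K → ℝ}
    (hS : ∀ η ∈ stdSimplex ℝ K, IsSplit η (A η) (Z η)) {ξ : K → ℝ} {α₀ : ℕ → ℝ}
    {ζ₀ : ℕ → K → ℝ} (h₀ : IsSplit ξ α₀ ζ₀) (hξ : ξ ᵥ* M = ξ) :
    ∀ n, IsSplit ξ (beliefProcess M A Z α₀ ζ₀ n).1 (beliefProcess M A Z α₀ ζ₀ n).2
  | 0 => h₀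
  | n + 1 => hξ ▸ ((isSplit_beliefProcess hM hS h₀ hξ n).bind hS).vecMul hM

end

theorem markovian_persuasion_weighted_value_nondecreasing_general
    {K : Type*} [Fintype K]
    (M : Matrix K K ℝ) (hM : IsStochastic M)
    (u : (K → ℝ) → ℝ) (hu0 : ∀ ξ ∈ stdSimplex ℝ K, 0 ≤ u ξ)
    (C : ℝ) (hC : IsLUB (u '' stdSimplex ℝ K) C)
    (v : ℝ → (K → ℝ) → ℝ) (hv : IsValueFamily M u C v)
    (πM : K → ℝ) (hπinv : Matrix.vecMul πM M = πM)
    (ξs : K → (K → ℝ)) (hξs : ∀ i, ξs i ∈ stdSimplex ℝ K)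
    (haff : AffineIndependent ℝ ξs)
    (hconv : ∀ ξ ∈ stdSimplex ℝ K, Matrix.vecMul ξ M ∈ convexHull ℝ (Set.range ξs))
    (γ : K → ℝ) (hγ0 : ∀ i, 0 ≤ γ i) (hγ1 : ∑ i, γ i = 1)
    (hγπ : πM = ∑ i, γ i • ξs i) :
    ∀ δ₁ δ₂ : ℝ, 0 ≤ δ₁ → δ₁ ≤ δ₂ → δ₂ < 1 →
      (∑ i, γ i * v δ₁ (ξs i)) ≤ ∑ i, γ i * v δ₂ (ξs i) := by
  intro δ₁ δ₂ hδ₁0 h12 hδ₂1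
  have hδ₁ : δ₁ ∈ Ico 0 1 := ⟨hδ₁0, h12.trans_lt hδ₂1⟩
  have hδ₂ : δ₂ ∈ Ico 0 1 := ⟨hδ₁0.trans h12, hδ₂1⟩
  obtain ⟨α₀, ζ₀, h₀, hexpect₀⟩ := exists_isSplit_sum hγ0 hγ1 hξs
  refine le_of_forall_pos_le_add fun ε hε => ?_
  choose! A Z hS hopt using fun η (hη : η ∈ stdSimplex ℝ K) =>
    hv.exists_isSplit_le_splitPayoff_add hδ₁ hη (mul_pos (sub_pos.2 hδ₁.2) hε)
  set μ := beliefProcess M A Z α₀ ζ₀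
  have hμ : ∀ n, IsSplit πM (μ n).1 (μ n).2 := isSplit_beliefProcess hM hS (hγπ ▸ h₀) hπinv
  have hbdd : ∀ δ ∈ Ico (0 : ℝ) 1, ∀ n, |expect (μ n).1 (μ n).2 (v δ)| ≤ C := fun δ hδ n =>
    (hμ n).abs_expect_le fun η hη => hv.abs_apply_le hδ hη
  have hx0 : ∀ n, expect α₀ ζ₀ (v δ₁) ≤ expect (μ n).1 (μ n).2 (v δ₁)
    | 0 => le_rfl
    | n + 1 => (hexpect₀ _).le.trans <| (hv.concaveOn hM hu0 hC hδ₁).sum_mul_le_expect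
        (fun η hη => hv.abs_apply_le hδ₁ hη) hξs haff hγ1 (hγπ ▸ hμ (n + 1))
        fun s => hconv _ (((hμ n).bind hS).2.1 s)
  rw [← hexpect₀, ← hexpect₀]
  exact le_add_of_discounted_recursions (x := fun n => expect (μ n).1 (μ n).2 (v δ₁))
    (c := fun n => expect (bindWeights (μ n).1 (μ n).2 A) (bindPoints (μ n).2 Z) u)
    h12 hδ₂.1 hδ₂1 ⟨C, by rintro _ ⟨n, rfl⟩; exact (le_abs_self _).trans (hbdd δ₁ hδ₁ n)⟩
    ⟨-C, by rintro _ ⟨n, rfl⟩; exact neg_le_of_abs_le (hbdd δ₂ hδ₂ n)⟩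
    (fun n => hv.expect_le_stage_add hM hu0 hC hδ₁ hS hopt (hμ n))
    (fun n => hv.stage_le_expect hM hu0 hC hδ₂ hS (hμ n)) hx0

theorem markovian_persuasion_weighted_value_nondecreasing
    {K : Type*} [Fintype K] [Nonempty K] [DecidableEq K]
    (M : Matrix K K ℝ) (hM : IsStochastic M)
    (hirr : ∀ ℓ ℓ' : K, ∃ n : ℕ, 1 ≤ n ∧ 0 < (M ^ n) ℓ ℓ')
    (u : (K → ℝ) → ℝ) (hu0 : ∀ ξ ∈ stdSimplex ℝ K, 0 ≤ u ξ)
    (husc : UpperSemicontinuousOn u (stdSimplex ℝ K))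
    (C : ℝ) (hC : IsLUB (u '' stdSimplex ℝ K) C)
    (v : ℝ → (K → ℝ) → ℝ) (hv : IsValueFamily M u C v)
    (πM : K → ℝ) (hπ : πM ∈ stdSimplex ℝ K) (hπinv : Matrix.vecMul πM M = πM)
    (hπuniq : ∀ π' ∈ stdSimplex ℝ K, Matrix.vecMul π' M = π' → π' = πM)
    (ξs : K → (K → ℝ)) (hξs : ∀ i, ξs i ∈ stdSimplex ℝ K)
    (haff : AffineIndependent ℝ ξs)
    (hconv : ∀ ξ ∈ stdSimplex ℝ K, Matrix.vecMul ξ M ∈ convexHull ℝ (Set.range ξs))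
    (γ : K → ℝ) (hγ0 : ∀ i, 0 ≤ γ i) (hγ1 : ∑ i, γ i = 1)
    (hγπ : πM = ∑ i, γ i • ξs i) :
    ∀ δ₁ δ₂ : ℝ, 0 ≤ δ₁ → δ₁ ≤ δ₂ → δ₂ < 1 →
      (∑ i, γ i * v δ₁ (ξs i)) ≤ ∑ i, γ i * v δ₂ (ξs i) :=
  markovian_persuasion_weighted_value_nondecreasing_general M hM u hu0 C hC v hv πM hπinv ξs hξs
    haff hconv γ hγ0 hγ1 hγπ
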